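/- arXiv:2602.01235 — 2 statements merged into one kernel-verified Lean document; each statement's English description precedes it below -/
import Mathlib

section
/- For every integer k ≥ 1 and every integer ℓ with 0 ≤ ℓ ≤ k, the following identity holds in ℚ (with the convention that the binomial coefficient C(n,r) vanishes unless 0 ≤ r ≤ n): Σ_{j=0}^{⌊k/2⌋} (−1)^j · (k/(k−j)) · C(k−j, j) · C(k−2j, ℓ−j) = 1 if ℓ = 0 or ℓ = k, and = 0 if 1 ≤ ℓ ≤ k−1. -/
/-!
For `0 < l < k`, the product `C(k-j,j) C(k-2j,l-j)` equals `C(l,j) C(k-j,l)`, and the weight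
`k/(k-j) = 1 + j/(k-j)` splits the sum into `F(l,k) - F(l-1,k-2)`, where
`F(l,m) = ∑ⱼ (-1)^j C(l,j) C(m-j,l)` is the `l`-th backward difference of the degree-`l`
polynomial `C(x,l)` at `m` and hence equals `1` whenever `l ≤ m`.
For `l = 0` and `l = k` only the term `j = 0` survives.
-/

open Finset

namespace Nat

theorem sum_range_succ_alternating_choose_mul_choose {l m : ℕ} (hlm : l ≤ m) :
    ∑ j ∈ range (l + 1), (-1 : ℤ) ^ j * l.choose j * (m - j).choose l = 1 := by
  -- `Δ^[l] (x ↦ C(x, l)) = 1`, read off at `m - l` and reindexed by `j ↦ l - j`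
  have h := congrFun (fwdDiff_iter_choose 0 l) (m - l)
  rw [fwdDiff_iter_eq_sum_shift, ← sum_range_reflect] at h
  simp only [add_zero, choose_zero_right, cast_one, smul_eq_mul, mul_one,
    add_tsub_cancel_right] at h
  refine (sum_congr rfl fun j hj => ?_).trans h
  have hjl : j ≤ l := Nat.lt_succ_iff.mp (mem_range.mp hj)
  rw [choose_symm hjl, Nat.sub_sub_self hjl, show m - l + (l - j) = m - j by omega]

theorem sum_range_alternating_choose_mul_choose {R : Type*} [Ring R] {l m N : ℕ} (hlm : l ≤ m)
    (hN : min l (m - l) < N) :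
    ∑ j ∈ range N, (-1 : R) ^ j * l.choose j * (m - j).choose l = 1 := by
  have vanish : ∀ j ≥ min l (m - l) + 1, (-1 : R) ^ j * l.choose j * (m - j).choose l = 0 := by
    intro j hj
    rcases le_or_gt j l with hjl | hlj
    · rw [choose_eq_zero_of_lt (by omega : m - j < l)]; simp
    · rw [choose_eq_zero_of_lt hlj]; simp
  rw [eventually_constant_sum vanish hN, ← eventually_constant_sum vanish (by omega : _ ≤ l + 1)]
  have h := congrArg (Int.cast : ℤ → R) (sum_range_succ_alternating_choose_mul_choose hlm)
  push_cast at h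
  exact h

theorem choose_mul_ite_choose_sub (n j l : ℕ) :
    n.choose j * (if j ≤ l then (n - j).choose (l - j) else 0) = n.choose l * l.choose j := by
  split_ifs with hjl
  · exact (choose_mul hjl).symm
  · rw [choose_eq_zero_of_lt (not_le.mp hjl)]; simp

theorem div_sub_mul_choose_mul_choose {K : Type*} [Field K] [CharZero K] {k l j : ℕ}
    (hj : 0 < j) (hjk : j < k) (hl : 0 < l) :
    (k : K) / (k - j) * (l.choose j * (k - j).choose l) =
      l.choose j * (k - j).choose l + (l - 1).choose (j - 1) * (k - j - 1).choose (l - 1) := by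
  obtain ⟨i, rfl⟩ : ∃ i, j = i + 1 := ⟨j - 1, by omega⟩
  obtain ⟨l, rfl⟩ : ∃ l', l = l' + 1 := ⟨l - 1, by omega⟩
  obtain ⟨n, rfl⟩ : ∃ n, k = n + 1 + (i + 1) := ⟨k - (i + 1) - 1, by omega⟩
  have hl : ((l + 1) * l.choose i : K) = (l + 1).choose (i + 1) * (i + 1) := by
    exact_mod_cast add_one_mul_choose_eq l i
  have hn : ((n + 1) * n.choose l : K) = (n + 1).choose (l + 1) * (l + 1) := by
    exact_mod_cast add_one_mul_choose_eq n l
  simp only [add_tsub_cancel_right]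
  push_cast
  rw [add_sub_cancel_right]
  field_simp
  linear_combination (-((n + 1).choose (l + 1) : K)) * hl - (l.choose i : K) * hn

theorem sum_range_succ_div_sub_mul_choose_mul_choose {K : Type*} [Field K] [CharZero K]
    {k l N : ℕ} (hN : N < k) (hl : 0 < l) :
    ∑ j ∈ range (N + 1), (-1 : K) ^ j * ((k : K) / (k - j)) * (l.choose j * (k - j).choose l) =
      ∑ j ∈ range (N + 1), (-1 : K) ^ j * l.choose j * (k - j).choose l -
        ∑ i ∈ range N, (-1 : K) ^ i * (l - 1).choose i * (k - 2 - i).choose (l - 1) := by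
  have split : ∀ i ∈ range N,
      (-1 : K) ^ (i + 1) * ((k : K) / (k - (i + 1 : ℕ))) *
          (l.choose (i + 1) * (k - (i + 1)).choose l) =
        (-1 : K) ^ (i + 1) * l.choose (i + 1) * (k - (i + 1)).choose l -
          (-1 : K) ^ i * (l - 1).choose i * (k - 2 - i).choose (l - 1) := by
    intro i hi
    have hiN : i < N := mem_range.mp hi
    rw [mul_assoc, div_sub_mul_choose_mul_choose (K := K) (k := k) (j := i + 1) (by omega)
      (by omega) hl, show k - (i + 1) - 1 = k - 2 - i by omega]
    simp only [add_tsub_cancel_right, pow_succ]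
    ring
  rw [sum_range_succ', sum_congr rfl split, sum_sub_distrib, sum_range_succ' _ N]
  have hk : (k : K) ≠ 0 := Nat.cast_ne_zero.mpr (by omega)
  simp [hk]
  ring

end Nat

theorem binomial_orthogonality (k l : ℕ) (hk : 1 ≤ k) (hl : l ≤ k) :
    ∑ j ∈ Finset.range (k / 2 + 1),
        (-1 : ℚ) ^ j * ((k : ℚ) / ((k : ℚ) - (j : ℚ))) * ((k - j).choose j : ℚ) *
          (if j ≤ l then ((k - 2 * j).choose (l - j) : ℚ) else 0) =
      if l = 0 ∨ l = k then 1 else 0 := by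
  have revision : ∀ j ∈ range (k / 2 + 1),
      (-1 : ℚ) ^ j * ((k : ℚ) / ((k : ℚ) - (j : ℚ))) * ((k - j).choose j : ℚ) *
          (if j ≤ l then ((k - 2 * j).choose (l - j) : ℚ) else 0) =
        (-1 : ℚ) ^ j * ((k : ℚ) / (k - j)) * (l.choose j * (k - j).choose l) := by
    intro j hj
    rw [show k - 2 * j = k - j - j by omega, mul_assoc, ← Nat.cast_zero, ← Nat.cast_ite,
      ← Nat.cast_mul, Nat.choose_mul_ite_choose_sub]
    push_cast
    ring
  rw [sum_congr rfl revision]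
  have hk0 : (k : ℚ) ≠ 0 := Nat.cast_ne_zero.mpr (by omega)
  rcases Nat.eq_zero_or_pos l with rfl | hl0
  · rw [if_pos (Or.inl rfl), sum_eq_single 0 (fun j _ hj => by
      simp [Nat.choose_eq_zero_of_lt (Nat.pos_of_ne_zero hj)]) (by simp)]
    simp [hk0]
  rcases hl.eq_or_lt with rfl | hlk
  · rw [if_pos (Or.inr rfl), sum_eq_single 0 (fun j _ hj => by
      simp [Nat.choose_eq_zero_of_lt (by omega : l - j < l)]) (by simp)]
    simp [hk0]
  rw [if_neg (by omega), Nat.sum_range_succ_div_sub_mul_choose_mul_choose (by omega) hl0,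
    Nat.sum_range_alternating_choose_mul_choose hl (by omega),
    Nat.sum_range_alternating_choose_mul_choose (by omega : l - 1 ≤ k - 2) (by omega), sub_self]
end

section
/- Let a, b, f ∈ ℂ be such that a+b+1/2, 2a+2b, f and 2f are not nonpositive integers and are nonzero. Then for every x ∈ ℂ with |x| < 1: ( Σ_{k=0}^∞ (a)_k (b)_k x^k / ((a+b+1/2)_k · k!) ) · ( Σ_{k=0}^∞ (a)_k (b)_k (f+1)_k x^k / ((a+b+1/2)_k (f)_k · k!) ) = Σ_{k=0}^∞ (2a)_k (2b)_k (a+b)_k (2f+1)_k x^k / ((a+b+1/2)_k (2a+2b)_k (2f)_k · k!). -/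
open Finset
open scoped BigOperators Nat

/-- Rising factorial (Pochhammer symbol) `(z)_k = z (z+1) ⋯ (z+k-1)`. -/
noncomputable def rf (z : ℂ) (k : ℕ) : ℂ := ∏ i ∈ Finset.range k, (z + i)

/-! Write `A k` for the coefficients of `₂F₁(a, b; a + b + 1/2; x)` and `D k` for those of
`₃F₂(2a, 2b, a + b; a + b + 1/2, 2a + 2b; x)`. Since `(f + 1)_k / (f)_k = 1 + k / f`, the second
factor has coefficients `A k * (1 + k / f)` and the right side `D k * (1 + k / (2f))`. By the
symmetry `i ↔ j`, `∑_{i+j=k} A i A j j = (k/2) ∑_{i+j=k} A i A j`, so everything reduces to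
Clausen's identity `∑_{i+j=k} A i A j = D k`. Both sides satisfy the same first-order recurrence
in `k`; for the Cauchy sum it follows by telescoping in `i` against an explicit (Zeilberger)
certificate. -/

open Filter Topology

theorem rf_zero (z : ℂ) : rf z 0 = 1 := prod_range_zero _

theorem rf_succ (z : ℂ) (k : ℕ) : rf z (k + 1) = rf z k * (z + k) := prod_range_succ _ _

theorem add_natCast_ne_zero {z : ℂ} (hz : ∀ n : ℕ, z ≠ -(n : ℂ)) (k : ℕ) :
    z + k ≠ 0 :=
  fun h => hz k (eq_neg_of_add_eq_zero_left h)

theorem rf_ne_zero {z : ℂ} (hz : ∀ n : ℕ, z ≠ -(n : ℂ)) (k : ℕ) : rf z k ≠ 0 :=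
  prod_ne_zero_iff.2 fun i _ => add_natCast_ne_zero hz i

theorem rf_add_one_mul (z : ℂ) (k : ℕ) : rf (z + 1) k * z = rf z k * (z + k) := by
  induction k with
  | zero => simp [rf_zero]
  | succ k ih =>
    rw [rf_succ, rf_succ]
    push_cast
    linear_combination (z + 1 + k) * ih

theorem rf_add_one_div {z : ℂ} (hz : ∀ n : ℕ, z ≠ -(n : ℂ)) (k : ℕ) :
    rf (z + 1) k / rf z k = 1 + k / z := by
  have hz0 : z ≠ 0 := by simpa using hz 0
  rw [div_eq_iff (rf_ne_zero hz k), ← mul_left_inj' hz0, rf_add_one_mul]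
  field_simp

noncomputable def hyp2F1Coeff (a b c : ℂ) (k : ℕ) : ℂ := rf a k * rf b k / (rf c k * k !)

theorem hyp2F1Coeff_zero (a b c : ℂ) : hyp2F1Coeff a b c 0 = 1 := by
  simp [hyp2F1Coeff, rf_zero]

theorem hyp2F1Coeff_succ (a b c : ℂ) (k : ℕ) :
    hyp2F1Coeff a b c (k + 1) =
      hyp2F1Coeff a b c k * ((a + k) * (b + k) / ((c + k) * (k + 1))) := by
  rw [hyp2F1Coeff, hyp2F1Coeff, div_mul_div_comm, rf_succ, rf_succ, rf_succ, Nat.factorial_succ]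
  push_cast
  ring

noncomputable def clausenCoeff (a b : ℂ) (k : ℕ) : ℂ :=
  rf (2 * a) k * rf (2 * b) k * rf (a + b) k /
    (rf (a + b + 1 / 2) k * rf (2 * a + 2 * b) k * k !)

theorem clausenCoeff_succ (a b : ℂ) (k : ℕ) :
    clausenCoeff a b (k + 1) = clausenCoeff a b k *
      ((2 * a + k) * (2 * b + k) * (a + b + k) /
        ((a + b + 1 / 2 + k) * (2 * a + 2 * b + k) * (k + 1))) := by
  rw [clausenCoeff, clausenCoeff, div_mul_div_comm]
  simp only [rf_succ, Nat.factorial_succ]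
  push_cast
  ring

theorem Finset.Nat.sum_antidiagonal_telescope {M : Type*} [AddCommGroup M] (G : ℕ → ℕ → M)
    (n : ℕ) :
    ∑ p ∈ antidiagonal n, (G (p.1 + 1) p.2 - G p.1 (p.2 + 1)) =
      G (n + 1) 0 - G 0 (n + 1) := by
  have h₁ := Nat.sum_antidiagonal_succ (n := n) (f := fun p => G p.1 p.2)
  have h₂ := Nat.sum_antidiagonal_succ' (n := n) (f := fun p => G p.1 p.2)
  rw [sum_sub_distrib, eq_sub_of_add_eq' h₁.symm, eq_sub_of_add_eq' h₂.symm]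
  abel

theorem Finset.Nat.two_mul_sum_antidiagonal_mul_snd {R : Type*} [CommSemiring R] (g : ℕ → R)
    (n : ℕ) :
    2 * ∑ p ∈ antidiagonal n, g p.1 * g p.2 * p.2 =
      n * ∑ p ∈ antidiagonal n, g p.1 * g p.2 := by
  rw [two_mul]
  nth_rw 1 [← Nat.sum_antidiagonal_swap]
  rw [← sum_add_distrib, mul_sum]
  refine sum_congr rfl fun p hp => ?_
  rw [← mem_antidiagonal.1 hp]
  simp only [Prod.fst_swap, Prod.snd_swap]
  push_cast
  ring

/-- Found by Zeilberger's algorithm. It vanishes at `i = 0` and equals minus the leading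
coefficient of the recurrence at `i = k + 1`, so the boundary terms of the telescoping sum
cancel. -/
noncomputable def clausenCertificate (a b k i : ℂ) : ℂ :=
  i * (1 - 3 * i + 2 * i ^ 2 + 3 / 2 * k - 3 * k * i - (a + b) * (1 + 3 * k + 2 * (a + b)))

section Clausen

variable {a b : ℂ}

local notation "𝒜" => hyp2F1Coeff a b (a + b + 1 / 2)

theorem clausenCertificate_step (h1 : ∀ n : ℕ, a + b + 1 / 2 ≠ -(n : ℂ))
    {i j k : ℕ} (hk : i + j = k) :
    (a + b + 1 / 2 + k) * (2 * a + 2 * b + k) * (k + 1) * (𝒜 i * 𝒜 (j + 1)) -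
        (2 * a + k) * (2 * b + k) * (a + b + k) * (𝒜 i * 𝒜 j) =
      clausenCertificate a b k (i + 1 : ℕ) * (𝒜 (i + 1) * 𝒜 j) -
        clausenCertificate a b k i * (𝒜 i * 𝒜 (j + 1)) := by
  subst hk
  have := add_natCast_ne_zero h1 i
  have := add_natCast_ne_zero h1 j
  have := Nat.cast_add_one_ne_zero (R := ℂ) i
  have := Nat.cast_add_one_ne_zero (R := ℂ) j
  simp only [hyp2F1Coeff_succ, clausenCertificate]
  -- keeps `a + b + 1 / 2 + i` atomic, so that `field_simp` sees that it is nonzero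
  generalize hc : a + b + 1 / 2 = c at *
  push_cast
  field_simp
  rw [← hc]
  ring

theorem sum_antidiagonal_hyp2F1Coeff_mul_succ (h1 : ∀ n : ℕ, a + b + 1 / 2 ≠ -(n : ℂ))
    (k : ℕ) :
    (a + b + 1 / 2 + k) * (2 * a + 2 * b + k) * (k + 1) *
        ∑ p ∈ antidiagonal (k + 1), 𝒜 p.1 * 𝒜 p.2 =
      (2 * a + k) * (2 * b + k) * (a + b + k) * ∑ p ∈ antidiagonal k, 𝒜 p.1 * 𝒜 p.2 := by
  have htel :=
    Nat.sum_antidiagonal_telescope (fun i j => clausenCertificate a b k i * (𝒜 i * 𝒜 j)) k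
  rw [← sum_congr rfl fun p hp => clausenCertificate_step h1 (mem_antidiagonal.1 hp),
    sum_sub_distrib, ← mul_sum, ← mul_sum] at htel
  have hQ0 : clausenCertificate a b k 0 = 0 := by simp [clausenCertificate]
  have hQk : clausenCertificate a b k (k + 1) =
      -((a + b + 1 / 2 + k) * (2 * a + 2 * b + k) * (k + 1)) := by
    simp only [clausenCertificate]; ring
  push_cast at htel
  rw [hQ0, hQk, hyp2F1Coeff_zero] at htel
  rw [Nat.sum_antidiagonal_succ', hyp2F1Coeff_zero]
  linear_combination htel

theorem sum_antidiagonal_hyp2F1Coeff_mul_eq_clausenCoeff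
    (h1 : ∀ n : ℕ, a + b + 1 / 2 ≠ -(n : ℂ))
    (h2 : ∀ n : ℕ, 2 * a + 2 * b ≠ -(n : ℂ)) (k : ℕ) :
    ∑ p ∈ antidiagonal k, 𝒜 p.1 * 𝒜 p.2 = clausenCoeff a b k := by
  induction k with
  | zero => simp [hyp2F1Coeff_zero, clausenCoeff, rf_zero]
  | succ k ih =>
    have hP : (a + b + 1 / 2 + k) * (2 * a + 2 * b + k) * (k + 1) ≠ 0 :=
      mul_ne_zero (mul_ne_zero (add_natCast_ne_zero h1 k) (add_natCast_ne_zero h2 k))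
        (Nat.cast_add_one_ne_zero k)
    rw [clausenCoeff_succ, ← ih, mul_div_assoc', eq_div_iff hP]
    linear_combination sum_antidiagonal_hyp2F1Coeff_mul_succ h1 k

theorem sum_antidiagonal_hyp2F1Coeff_mul_pow_mul_one_add_div
    (h1 : ∀ n : ℕ, a + b + 1 / 2 ≠ -(n : ℂ))
    (h2 : ∀ n : ℕ, 2 * a + 2 * b ≠ -(n : ℂ)) (f x : ℂ) (k : ℕ) :
    ∑ p ∈ antidiagonal k, 𝒜 p.1 * x ^ p.1 * (𝒜 p.2 * (1 + p.2 / f) * x ^ p.2) =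
      clausenCoeff a b k * (1 + k / (2 * f)) * x ^ k := by
  have hsym := Nat.two_mul_sum_antidiagonal_mul_snd 𝒜 k
  have hS := sum_antidiagonal_hyp2F1Coeff_mul_eq_clausenCoeff h1 h2 k
  calc _ = (∑ p ∈ antidiagonal k, 𝒜 p.1 * 𝒜 p.2 +
        (∑ p ∈ antidiagonal k, 𝒜 p.1 * 𝒜 p.2 * p.2) / f) * x ^ k := by
        rw [sum_div, ← sum_add_distrib, sum_mul]
        refine sum_congr rfl fun p hp => ?_
        rw [← mem_antidiagonal.1 hp, pow_add]
        ring
    _ = _ := by linear_combination (1 + k / (2 * f)) * x ^ k * hS + x ^ k / (2 * f) * hsym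

end Clausen

theorem summable_norm_of_tendsto_norm_ratio {R : Type*} [SeminormedRing R] {u r : ℕ → R}
    {l : ℝ} (hl : l < 1) (hu : ∀ k, u (k + 1) = u k * r k)
    (hr : Tendsto (fun k => ‖r k‖) atTop (𝓝 l)) :
    Summable fun k => ‖u k‖ := by
  obtain ⟨l', hl', hl'1⟩ := exists_between hl
  refine summable_of_ratio_norm_eventually_le hl'1 ?_
  filter_upwards [hr.eventually_lt_const hl'] with k hk
  rw [norm_norm, norm_norm, hu, mul_comm l']
  exact (norm_mul_le _ _).trans (mul_le_mul_of_nonneg_left hk.le (norm_nonneg _))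

theorem tendsto_add_natCast_div_add_natCast (u v : ℂ) :
    Tendsto (fun k : ℕ => (u + k) / (v + k)) atTop (𝓝 1) := by
  simpa using tendsto_add_mul_div_add_mul_atTop_nhds u v 1 one_ne_zero

theorem tendsto_hyp2F1Coeff_ratio_mul (a b c x : ℂ) :
    Tendsto (fun k : ℕ => (a + k) * (b + k) / ((c + k) * (k + 1)) * x) atTop (𝓝 x) := by
  have h := ((tendsto_add_natCast_div_add_natCast a c).mul
    (tendsto_add_natCast_div_add_natCast b 1)).mul_const x
  simp only [one_mul, ← mul_div_mul_comm] at h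
  simpa only [add_comm (1 : ℂ)] using h

theorem summable_norm_hyp2F1Coeff_mul_pow (a b c : ℂ) {x : ℂ} (hx : ‖x‖ < 1) :
    Summable fun k => ‖hyp2F1Coeff a b c k * x ^ k‖ :=
  summable_norm_of_tendsto_norm_ratio hx (fun k => by rw [hyp2F1Coeff_succ, pow_succ]; ring)
    (tendsto_hyp2F1Coeff_ratio_mul a b c x).norm

theorem summable_norm_hyp2F1Coeff_mul_one_add_div_mul_pow (a b c : ℂ) {f x : ℂ}
    (hf : ∀ n : ℕ, f ≠ -(n : ℂ)) (hx : ‖x‖ < 1) :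
    Summable fun k => ‖hyp2F1Coeff a b c k * (1 + k / f) * x ^ k‖ := by
  have hf0 : f ≠ 0 := by simpa using hf 0
  have hr : Tendsto (fun k : ℕ => (a + k) * (b + k) / ((c + k) * (k + 1)) * x *
      ((f + 1 + k) / (f + k))) atTop (𝓝 x) := by
    simpa using (tendsto_hyp2F1Coeff_ratio_mul a b c x).mul
      (tendsto_add_natCast_div_add_natCast (f + 1) f)
  refine summable_norm_of_tendsto_norm_ratio hx (fun k => ?_) hr.norm
  have := add_natCast_ne_zero hf k
  rw [hyp2F1Coeff_succ, pow_succ]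
  push_cast
  field_simp
  ring

theorem clausen_contiguous_f_m_zero (a b f : ℂ)
    (h1 : ∀ n : ℕ, a + b + 1 / 2 ≠ -(n : ℂ))
    (h2 : ∀ n : ℕ, 2 * a + 2 * b ≠ -(n : ℂ))
    (hf : ∀ n : ℕ, f ≠ -(n : ℂ))
    (h2f : ∀ n : ℕ, 2 * f ≠ -(n : ℂ))
    (x : ℂ) (hx : ‖x‖ < 1) :
    (∑' k : ℕ, rf a k * rf b k * x ^ k / (rf (a + b + 1 / 2) k * (k.factorial : ℂ))) *
      (∑' k : ℕ, rf a k * rf b k * rf (f + 1) k * x ^ k /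
        (rf (a + b + 1 / 2) k * rf f k * (k.factorial : ℂ))) =
      ∑' k : ℕ, rf (2 * a) k * rf (2 * b) k * rf (a + b) k * rf (2 * f + 1) k * x ^ k /
        (rf (a + b + 1 / 2) k * rf (2 * a + 2 * b) k * rf (2 * f) k * (k.factorial : ℂ)) := by
  set A := hyp2F1Coeff a b (a + b + 1 / 2)
  calc _ = (∑' k, A k * x ^ k) * ∑' k, A k * (1 + k / f) * x ^ k := by
        congr 1 <;> refine tsum_congr fun k => ?_
        · simp only [A, hyp2F1Coeff]; ring
        · rw [← rf_add_one_div hf]; simp only [A, hyp2F1Coeff]; ring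
    _ = ∑' k, ∑ p ∈ antidiagonal k, A p.1 * x ^ p.1 * (A p.2 * (1 + p.2 / f) * x ^ p.2) :=
        tsum_mul_tsum_eq_tsum_sum_antidiagonal_of_summable_norm
          (summable_norm_hyp2F1Coeff_mul_pow _ _ _ hx)
          (summable_norm_hyp2F1Coeff_mul_one_add_div_mul_pow _ _ _ hf hx)
    _ = _ := tsum_congr fun k => by
        rw [sum_antidiagonal_hyp2F1Coeff_mul_pow_mul_one_add_div h1 h2, ← rf_add_one_div h2f,
          clausenCoeff]
        ring
end
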